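/- arXiv:1401.0612 — 2 statements merged into one kernel-verified Lean document; each statement's English description precedes it below -/
import Mathlib

section
/- Let U ⊆ ℝ² be open and z : ℝ² → ℝ twice continuously differentiable on U. On the open set Ω = {(x,y,p) ∈ ℝ³ : (x,y) ∈ U, D(x,y,p) ≠ 0}, where D = z_y + z_x·p − p², define the vector fields V₁(x,y,p) = (1, 0, 1/D) and V₂(x,y,p) = (0, 1, (p − z_x)/D). Then at every point (x,y,p) ∈ Ω the Lie bracket of V₁ and V₂ equals (0, 0, (z_yy + z_x·z_xy − z_y·z_xx + 1)(x,y) / D(x,y,p)²). In particular, V₁ and V₂ commute on Ω if and only if z satisfies the Gibbons–Tsarev equation on U. -/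
/-! Both fields have constant horizontal part, so their bracket is vertical, and its third
component `V₁ G − V₂ F` is minus the compatibility expression `E` of system (1). Differentiating
`F = 1/D` and `G = (p − z_x)/D` and using `z_xy = z_yx`, the numerator of `E` collapses to
`−(z_yy + z_x z_xy − z_y z_xx + 1)`, independent of `p`. For the converse direction, every
`(x, y) ∈ U` lies below a point of `Ω`: the monic quadratic `p ↦ −D(x, y, p)` cannot vanish at
`p = 0, 1, −1` simultaneously. -/

/-- Partial derivative in `x` of a function on `ℝ × ℝ`. -/
noncomputable def pdx (f : ℝ × ℝ → ℝ) (q : ℝ × ℝ) : ℝ := fderiv ℝ f q (1, 0)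

/-- Partial derivative in `y` of a function on `ℝ × ℝ`. -/
noncomputable def pdy (f : ℝ × ℝ → ℝ) (q : ℝ × ℝ) : ℝ := fderiv ℝ f q (0, 1)

/-- Partial derivative in the first variable `x` of a function on `ℝ × ℝ × ℝ = {(x,y,p)}`. -/
noncomputable def pd1 (f : ℝ × ℝ × ℝ → ℝ) (q : ℝ × ℝ × ℝ) : ℝ := fderiv ℝ f q (1, 0, 0)

/-- Partial derivative in the second variable `y`. -/
noncomputable def pd2 (f : ℝ × ℝ × ℝ → ℝ) (q : ℝ × ℝ × ℝ) : ℝ := fderiv ℝ f q (0, 1, 0)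

/-- Partial derivative in the third variable `p`. -/
noncomputable def pd3 (f : ℝ × ℝ × ℝ → ℝ) (q : ℝ × ℝ × ℝ) : ℝ := fderiv ℝ f q (0, 0, 1)

/-- `D(x,y,p) = z_y(x,y) + z_x(x,y)·p − p²`. -/
noncomputable def Dfun (z : ℝ × ℝ → ℝ) (q : ℝ × ℝ × ℝ) : ℝ :=
  pdy z (q.1, q.2.1) + pdx z (q.1, q.2.1) * q.2.2 - q.2.2 ^ 2

/-- `F(x,y,p) = 1/D(x,y,p)`. -/
noncomputable def Ffun (z : ℝ × ℝ → ℝ) (q : ℝ × ℝ × ℝ) : ℝ := 1 / Dfun z q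

/-- `G(x,y,p) = (p − z_x(x,y))/D(x,y,p)`. -/
noncomputable def Gfun (z : ℝ × ℝ → ℝ) (q : ℝ × ℝ × ℝ) : ℝ :=
  (q.2.2 - pdx z (q.1, q.2.1)) / Dfun z q

/-- The Gibbons–Tsarev expression `z_yy + z_x·z_xy − z_y·z_xx + 1`. -/
noncomputable def GT (z : ℝ × ℝ → ℝ) (q : ℝ × ℝ) : ℝ :=
  pdy (pdy z) q + pdx z q * pdx (pdy z) q - pdy z q * pdx (pdx z) q + 1

/-- The compatibility (zero-curvature) expression
`E = ∂F/∂y + G·∂F/∂p − ∂G/∂x − F·∂G/∂p` of system (1). -/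
noncomputable def Efun (z : ℝ × ℝ → ℝ) (q : ℝ × ℝ × ℝ) : ℝ :=
  pd2 (Ffun z) q + Gfun z q * pd3 (Ffun z) q - pd1 (Gfun z) q - Ffun z q * pd3 (Gfun z) q

/-- Lie bracket of two vector fields on (an open subset of) `ℝ × ℝ × ℝ`:
`[V,W](q) = DW(q)·V(q) − DV(q)·W(q)`. -/
noncomputable def lieB (V W : ℝ × ℝ × ℝ → ℝ × ℝ × ℝ) (q : ℝ × ℝ × ℝ) : ℝ × ℝ × ℝ :=
  fderiv ℝ W q (V q) - fderiv ℝ V q (W q)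

open ContinuousLinearMap

theorem lieB_eq_vertical {F G : ℝ × ℝ × ℝ → ℝ} {q : ℝ × ℝ × ℝ}
    (hF : DifferentiableAt ℝ F q) (hG : DifferentiableAt ℝ G q) :
    lieB (fun u => (1, 0, F u)) (fun u => (0, 1, G u)) q
      = (0, 0, pd1 G q + F q * pd3 G q - pd2 F q - G q * pd3 F q) := by
  have hV₁ := (hasFDerivAt_const (1 : ℝ) q).prodMk ((hasFDerivAt_const (0 : ℝ) q).prodMk
    hF.hasFDerivAt)
  have hV₂ := (hasFDerivAt_const (0 : ℝ) q).prodMk ((hasFDerivAt_const (1 : ℝ) q).prodMk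
    hG.hasFDerivAt)
  have h₁ : ((1, 0, F q) : ℝ × ℝ × ℝ) = (1, 0, 0) + F q • (0, 0, 1) := by simp
  have h₂ : ((0, 1, G q) : ℝ × ℝ × ℝ) = (0, 1, 0) + G q • (0, 0, 1) := by simp
  rw [lieB, hV₁.fderiv, hV₂.fderiv]
  simp only [prod_apply, zero_apply, Prod.mk_sub_mk, h₁, h₂, map_add, map_smul, smul_eq_mul,
    mul_zero, add_zero, sub_self, pd1, pd2, pd3, Prod.mk.injEq, true_and]
  ring

theorem HasFDerivAt.fun_div {E : Type*} [NormedAddCommGroup E] [NormedSpace ℝ E]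
    {c d : E → ℝ} {c' d' : E →L[ℝ] ℝ} {x : E}
    (hc : HasFDerivAt c c' x) (hd : HasFDerivAt d d' x) (hx : d x ≠ 0) :
    HasFDerivAt (fun y => c y / d y) ((d x)⁻¹ • c' - (c x / d x ^ 2) • d') x := by
  have := hc.mul ((hasFDerivAt_inv hx).comp x hd)
  simp only [div_eq_mul_inv]
  refine this.congr_fderiv ?_
  ext v
  simp
  ring

theorem ContDiffAt.hasFDerivAt_fderiv_apply {E F : Type*} [NormedAddCommGroup E]
    [NormedSpace ℝ E] [NormedAddCommGroup F] [NormedSpace ℝ F] {f : E → F} {x : E}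
    (hf : ContDiffAt ℝ 2 f x) (v : E) :
    HasFDerivAt (fun y => fderiv ℝ f y v) ((apply ℝ F v).comp (fderiv ℝ (fderiv ℝ f) x)) x :=
  (apply ℝ F v).hasFDerivAt.comp x
    ((hf.fderiv_right (m := 1) le_rfl).differentiableAt one_ne_zero).hasFDerivAt

theorem ContDiffAt.pdy_pdx_eq {z : ℝ × ℝ → ℝ} {w : ℝ × ℝ} (hz : ContDiffAt ℝ 2 z w) :
    pdy (pdx z) w = pdx (pdy z) w := by
  unfold pdx pdy
  rw [(hz.hasFDerivAt_fderiv_apply _).fderiv, (hz.hasFDerivAt_fderiv_apply _).fderiv]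
  exact hz.isSymmSndFDerivAt (by simp) _ _

noncomputable def projXY : ℝ × ℝ × ℝ →L[ℝ] ℝ × ℝ :=
  (fst ℝ ℝ (ℝ × ℝ)).prod ((fst ℝ ℝ ℝ).comp (snd ℝ ℝ (ℝ × ℝ)))

noncomputable def projP : ℝ × ℝ × ℝ →L[ℝ] ℝ :=
  (snd ℝ ℝ ℝ).comp (snd ℝ ℝ (ℝ × ℝ))

@[simp] theorem projXY_apply (v : ℝ × ℝ × ℝ) : projXY v = (v.1, v.2.1) := rfl

@[simp] theorem projP_apply (v : ℝ × ℝ × ℝ) : projP v = v.2.2 := rfl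

theorem DifferentiableAt.hasFDerivAt_comp_projXY {f : ℝ × ℝ → ℝ} {q : ℝ × ℝ × ℝ}
    (hf : DifferentiableAt ℝ f (q.1, q.2.1)) :
    HasFDerivAt (fun u : ℝ × ℝ × ℝ => f (u.1, u.2.1)) ((fderiv ℝ f (q.1, q.2.1)).comp projXY) q :=
  hf.hasFDerivAt.comp q projXY.hasFDerivAt

section Derivatives

variable {z : ℝ × ℝ → ℝ} {q : ℝ × ℝ × ℝ}
  (ha : DifferentiableAt ℝ (pdx z) (q.1, q.2.1)) (hb : DifferentiableAt ℝ (pdy z) (q.1, q.2.1))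

include ha hb

theorem hasFDerivAt_Dfun :
    HasFDerivAt (Dfun z) ((fderiv ℝ (pdy z) (q.1, q.2.1)).comp projXY
      + q.2.2 • (fderiv ℝ (pdx z) (q.1, q.2.1)).comp projXY
      + (pdx z (q.1, q.2.1) - 2 * q.2.2) • projP) q := by
  have := (hb.hasFDerivAt_comp_projXY.add (ha.hasFDerivAt_comp_projXY.mul projP.hasFDerivAt)).sub
    (projP.hasFDerivAt.pow 2)
  refine (this.congr_fderiv ?_).congr_of_eventuallyEq (.of_forall fun u => rfl)
  ext <;> simp
  ring

variable (hD : Dfun z q ≠ 0)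
include hD

theorem hasFDerivAt_Ffun :
    HasFDerivAt (Ffun z) (-((Dfun z q ^ 2)⁻¹ • fderiv ℝ (Dfun z) q)) q :=
  ((hasFDerivAt_const 1 q).fun_div (hasFDerivAt_Dfun ha hb).differentiableAt.hasFDerivAt
    hD).congr_fderiv (by simp)

theorem hasFDerivAt_Gfun :
    HasFDerivAt (Gfun z) ((Dfun z q)⁻¹ • (projP - (fderiv ℝ (pdx z) (q.1, q.2.1)).comp projXY)
      - ((q.2.2 - pdx z (q.1, q.2.1)) / Dfun z q ^ 2) • fderiv ℝ (Dfun z) q) q :=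
  (projP.hasFDerivAt.sub ha.hasFDerivAt_comp_projXY).fun_div
    (hasFDerivAt_Dfun ha hb).differentiableAt.hasFDerivAt hD

theorem lieB_eq_neg_Efun :
    lieB (fun u => (1, 0, Ffun z u)) (fun u => (0, 1, Gfun z u)) q = (0, 0, -Efun z q) := by
  rw [lieB_eq_vertical (hasFDerivAt_Ffun ha hb hD).differentiableAt
    (hasFDerivAt_Gfun ha hb hD).differentiableAt, Efun]
  congr 2
  ring

theorem Efun_eq
    (hsymm : pdy (pdx z) (q.1, q.2.1) = pdx (pdy z) (q.1, q.2.1)) :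
    Efun z q = -GT z (q.1, q.2.1) / Dfun z q ^ 2 := by
  have hDq : Dfun z q = pdy z (q.1, q.2.1) + pdx z (q.1, q.2.1) * q.2.2 - q.2.2 ^ 2 := rfl
  have hxx : pdx (pdx z) (q.1, q.2.1) = fderiv ℝ (pdx z) (q.1, q.2.1) (1, 0) := rfl
  have hxy : pdx (pdy z) (q.1, q.2.1) = fderiv ℝ (pdy z) (q.1, q.2.1) (1, 0) := rfl
  have hyy : pdy (pdy z) (q.1, q.2.1) = fderiv ℝ (pdy z) (q.1, q.2.1) (0, 1) := rfl
  have hyx : pdy (pdx z) (q.1, q.2.1) = fderiv ℝ (pdx z) (q.1, q.2.1) (0, 1) := rfl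
  rw [hyx, hxy] at hsymm
  rw [Efun, pd1, pd2, pd3, pd3, (hasFDerivAt_Ffun ha hb hD).fderiv,
    (hasFDerivAt_Gfun ha hb hD).fderiv, (hasFDerivAt_Dfun ha hb).fderiv, Ffun, Gfun, GT,
    hxx, hxy, hyy]
  simp only [smul_add, neg_add_rev, add_apply, neg_apply, smul_apply, projP_apply, smul_eq_mul,
    mul_zero, neg_zero, comp_apply, projXY_apply, hsymm, zero_add, mul_one, ← Prod.zero_eq_mk,
    map_zero, add_zero, mul_neg, sub_apply, Prod.snd_zero, Prod.fst_zero, zero_sub, one_div,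
    sub_zero, neg_sub]
  field_simp
  rw [hDq]
  ring

end Derivatives

theorem lieB_eq_GT {z : ℝ × ℝ → ℝ} {q : ℝ × ℝ × ℝ} (hz : ContDiffAt ℝ 2 z (q.1, q.2.1))
    (hD : Dfun z q ≠ 0) :
    lieB (fun u => (1, 0, Ffun z u)) (fun u => (0, 1, Gfun z u)) q
      = (0, 0, GT z (q.1, q.2.1) / Dfun z q ^ 2) := by
  have ha := (hz.hasFDerivAt_fderiv_apply (1, 0)).differentiableAt
  have hb := (hz.hasFDerivAt_fderiv_apply (0, 1)).differentiableAt
  rw [lieB_eq_neg_Efun ha hb hD, Efun_eq ha hb hD hz.pdy_pdx_eq, neg_div, neg_neg]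

theorem exists_Dfun_ne_zero (z : ℝ × ℝ → ℝ) (w : ℝ × ℝ) : ∃ p, Dfun z (w.1, w.2, p) ≠ 0 := by
  by_contra! h
  have h₀ := h 0
  have h₁ := h 1
  have h₂ := h (-1)
  simp only [Dfun] at h₀ h₁ h₂
  linarith

/-- On `Ω = {(x,y,p) : (x,y) ∈ U, D ≠ 0}`, the Lie bracket of
`V₁ = (1,0,1/D)` and `V₂ = (0,1,(p−z_x)/D)` is `(0,0,GT/D²)`; in particular the two
fields commute on `Ω` iff `z` satisfies the Gibbons–Tsarev equation on `U`. -/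
theorem statement2 (U : Set (ℝ × ℝ)) (hU : IsOpen U) (z : ℝ × ℝ → ℝ)
    (hz : ContDiffOn ℝ 2 z U)
    (Ω : Set (ℝ × ℝ × ℝ)) (hΩ : Ω = {q | (q.1, q.2.1) ∈ U ∧ Dfun z q ≠ 0})
    (V₁ V₂ : ℝ × ℝ × ℝ → ℝ × ℝ × ℝ)
    (hV₁ : V₁ = fun q => (1, 0, Ffun z q))
    (hV₂ : V₂ = fun q => (0, 1, Gfun z q)) :
    (∀ q ∈ Ω, lieB V₁ V₂ q = (0, 0, GT z (q.1, q.2.1) / (Dfun z q) ^ 2)) ∧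
    ((∀ q ∈ Ω, lieB V₁ V₂ q = 0) ↔ ∀ q ∈ U, GT z q = 0) := by
  subst hΩ hV₁ hV₂
  have hbracket : ∀ q : ℝ × ℝ × ℝ, (q.1, q.2.1) ∈ U → Dfun z q ≠ 0 →
      lieB (fun u => (1, 0, Ffun z u)) (fun u => (0, 1, Gfun z u)) q
        = (0, 0, GT z (q.1, q.2.1) / Dfun z q ^ 2) :=
    fun q hq hD => lieB_eq_GT (hz.contDiffAt (hU.mem_nhds hq)) hD
  refine ⟨fun q hq => hbracket q hq.1 hq.2, fun h w hw => ?_, fun h q hq => ?_⟩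
  · obtain ⟨p, hp⟩ := exists_Dfun_ne_zero z w
    have := congrArg (fun v => v.2.2) (h (w.1, w.2, p) ⟨hw, hp⟩)
    simp only [hbracket _ hw hp] at this
    simpa [hp] using this
  · simp [hbracket q hq.1 hq.2, h _ hq.1]
end

section
/- Let U ⊆ ℝ² be open, z : ℝ² → ℝ twice continuously differentiable on U, and (x₀,y₀) ∈ U. Set D = z_y + z_x·p − p². Suppose there exist p₀ with D(x₀,y₀,p₀) ≠ 0, an open neighborhood Ω' of (x₀,y₀,p₀) contained in {(x,y,p) : (x,y) ∈ U, D ≠ 0}, and a twice continuously differentiable ψ : Ω' → ℝ with ∂ψ/∂p(x₀,y₀,p₀) ≠ 0, satisfying ∂ψ/∂x = −(1/D)·∂ψ/∂p and ∂ψ/∂y = ((z_x − p)/D)·∂ψ/∂p on Ω'. Then z satisfies the Gibbons–Tsarev equation z_yy + z_x·z_xy − z_y·z_xx + 1 = 0 at (x₀,y₀). -/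
open Filter Topology

section SecondDerivatives

variable {E F : Type*} [NormedAddCommGroup E] [NormedSpace ℝ E]
  [NormedAddCommGroup F] [NormedSpace ℝ F] {f : E → F} {x : E}

theorem ContDiffAt.differentiableAt_fderiv (hf : ContDiffAt ℝ 2 f x) :
    DifferentiableAt ℝ (fderiv ℝ f) x :=
  (hf.fderiv_right (m := 1) le_rfl).differentiableAt one_ne_zero

theorem ContDiffAt.fderiv_fderiv_apply_comm (hf : ContDiffAt ℝ 2 f x) (v w : E) :
    fderiv ℝ (fun y => fderiv ℝ f y v) x w = fderiv ℝ (fun y => fderiv ℝ f y w) x v := by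
  have hd := hf.differentiableAt_fderiv
  rw [fderiv_clm_apply hd (differentiableAt_const v), fderiv_clm_apply hd (differentiableAt_const w)]
  simpa using hf.isSymmSndFDerivAt (by simp) w v

theorem ContDiffAt.differentiableAt_fderiv_apply (hf : ContDiffAt ℝ 2 f x) (v : E) :
    DifferentiableAt ℝ (fun y => fderiv ℝ f y v) x :=
  hf.differentiableAt_fderiv.clm_apply (differentiableAt_const v)

end SecondDerivatives

theorem fderiv_fun_div_apply {𝕜 E : Type*} [NontriviallyNormedField 𝕜] [NormedAddCommGroup E]
    [NormedSpace 𝕜 E] {f g : E → 𝕜} {x : E} (hf : DifferentiableAt 𝕜 f x)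
    (hg : DifferentiableAt 𝕜 g x) (hx : g x ≠ 0) (v : E) :
    fderiv 𝕜 (fun y => f y / g y) x v = (fderiv 𝕜 f x v * g x - f x * fderiv 𝕜 g x v) / g x ^ 2 := by
  have h : HasFDerivAt (fun y => f y * (g y)⁻¹) _ x :=
    hf.hasFDerivAt.mul ((hasDerivAt_inv hx).comp_hasFDerivAt x hg.hasFDerivAt)
  simp_rw [div_eq_mul_inv]
  rw [h.fderiv]
  simp only [add_apply, smul_apply, smul_eq_mul, neg_mul, mul_neg]
  field_simp
  ring

section ZeroCurvature

variable {E : Type*} [NormedAddCommGroup E] [NormedSpace ℝ E]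

theorem fderiv_apply_add_mul_eq_zero {ψ F : E → ℝ} {x a w : E}
    (hψ : DifferentiableAt ℝ (fderiv ℝ ψ) x) (hF : DifferentiableAt ℝ F x)
    (h : ∀ᶠ y in 𝓝 x, fderiv ℝ ψ y a + F y * fderiv ℝ ψ y w = 0) (d : E) :
    fderiv ℝ (fderiv ℝ ψ) x d a + fderiv ℝ F x d * fderiv ℝ ψ x w
      + F x * fderiv ℝ (fderiv ℝ ψ) x d w = 0 := by
  have hL := (hψ.hasFDerivAt.clm_apply (hasFDerivAt_const a x)).add
    (hF.hasFDerivAt.mul (hψ.hasFDerivAt.clm_apply (hasFDerivAt_const w x)))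
  have h0 : HasFDerivAt (fun y => fderiv ℝ ψ y a + F y * fderiv ℝ ψ y w) (0 : E →L[ℝ] ℝ) x :=
    (hasFDerivAt_const (0 : ℝ) x).congr_of_eventuallyEq h
  have := congrArg (· d) (hL.unique h0)
  simp only [ContinuousLinearMap.comp_zero, zero_add, add_apply, ContinuousLinearMap.flip_apply,
    smul_apply, smul_eq_mul, zero_apply] at this
  linear_combination this

theorem curvature_mul_fderiv_eq_zero {ψ F G : E → ℝ} {x u v w : E}
    (hψ : ContDiffAt ℝ 2 ψ x) (hF : DifferentiableAt ℝ F x) (hG : DifferentiableAt ℝ G x)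
    (hu : ∀ᶠ y in 𝓝 x, fderiv ℝ ψ y u + F y * fderiv ℝ ψ y w = 0)
    (hv : ∀ᶠ y in 𝓝 x, fderiv ℝ ψ y v + G y * fderiv ℝ ψ y w = 0) :
    (fderiv ℝ F x v + G x * fderiv ℝ F x w - fderiv ℝ G x u - F x * fderiv ℝ G x w)
      * fderiv ℝ ψ x w = 0 := by
  have hψ' := hψ.differentiableAt_fderiv
  have hsymm : IsSymmSndFDerivAt ℝ ψ x := hψ.isSymmSndFDerivAt (by simp)
  have huv := fderiv_apply_add_mul_eq_zero hψ' hF hu v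
  have huw := fderiv_apply_add_mul_eq_zero hψ' hF hu w
  have hvu := fderiv_apply_add_mul_eq_zero hψ' hG hv u
  have hvw := fderiv_apply_add_mul_eq_zero hψ' hG hv w
  linear_combination huv - hvu + G x * huw - F x * hvw + hsymm u v
    - F x * hsymm v w + G x * hsymm u w

end ZeroCurvature

section GibbonsTsarev

variable {z : ℝ × ℝ → ℝ} {q : ℝ × ℝ × ℝ}

theorem hasFDerivAt_comp_xy {g : ℝ × ℝ → ℝ} (hg : DifferentiableAt ℝ g (q.1, q.2.1)) :
    HasFDerivAt (fun q : ℝ × ℝ × ℝ => g (q.1, q.2.1))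
      ((fderiv ℝ g (q.1, q.2.1)).comp ((ContinuousLinearMap.fst ℝ ℝ (ℝ × ℝ)).prod
        ((ContinuousLinearMap.fst ℝ ℝ ℝ).comp (ContinuousLinearMap.snd ℝ ℝ (ℝ × ℝ))))) q :=
  hg.hasFDerivAt.comp q (hasFDerivAt_fst.prodMk hasFDerivAt_snd.fst)

theorem fderiv_Dfun_apply (hx : DifferentiableAt ℝ (pdx z) (q.1, q.2.1))
    (hy : DifferentiableAt ℝ (pdy z) (q.1, q.2.1)) (v : ℝ × ℝ × ℝ) :
    fderiv ℝ (Dfun z) q v = fderiv ℝ (pdy z) (q.1, q.2.1) (v.1, v.2.1)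
      + fderiv ℝ (pdx z) (q.1, q.2.1) (v.1, v.2.1) * q.2.2
      + (pdx z (q.1, q.2.1) - 2 * q.2.2) * v.2.2 := by
  have hp := (hasFDerivAt_snd (𝕜 := ℝ) (p := q)).snd
  have h : HasFDerivAt (Dfun z) _ q :=
    ((hasFDerivAt_comp_xy hy).add ((hasFDerivAt_comp_xy hx).mul hp)).sub (hp.pow 2)
  rw [h.fderiv]
  simp only [Nat.add_one_sub_one, pow_one, nsmul_eq_mul, Nat.cast_ofNat, sub_apply, add_apply,
    ContinuousLinearMap.comp_apply, ContinuousLinearMap.prod_apply, ContinuousLinearMap.coe_fst',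
    ContinuousLinearMap.coe_snd', smul_apply, smul_eq_mul]
  ring

theorem fderiv_sub_pdx_apply (hx : DifferentiableAt ℝ (pdx z) (q.1, q.2.1)) (v : ℝ × ℝ × ℝ) :
    fderiv ℝ (fun q : ℝ × ℝ × ℝ => q.2.2 - pdx z (q.1, q.2.1)) q v
      = v.2.2 - fderiv ℝ (pdx z) (q.1, q.2.1) (v.1, v.2.1) := by
  have h : HasFDerivAt (fun q : ℝ × ℝ × ℝ => q.2.2 - pdx z (q.1, q.2.1)) _ q :=
    (hasFDerivAt_snd (𝕜 := ℝ) (p := q)).snd.sub (hasFDerivAt_comp_xy hx)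
  rw [h.fderiv]
  simp

theorem Efun_eq_neg_GT_div_sq (hz : ContDiffAt ℝ 2 z (q.1, q.2.1)) (hD : Dfun z q ≠ 0) :
    Efun z q = -GT z (q.1, q.2.1) / Dfun z q ^ 2 := by
  have hx : DifferentiableAt ℝ (pdx z) (q.1, q.2.1) := hz.differentiableAt_fderiv_apply _
  have hy : DifferentiableAt ℝ (pdy z) (q.1, q.2.1) := hz.differentiableAt_fderiv_apply _
  have hDd : DifferentiableAt ℝ (Dfun z) q := by
    unfold Dfun
    fun_prop
  have hNd : DifferentiableAt ℝ (fun q : ℝ × ℝ × ℝ => q.2.2 - pdx z (q.1, q.2.1)) q := by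
    fun_prop
  have hF : ∀ v, fderiv ℝ (Ffun z) q v = -fderiv ℝ (Dfun z) q v / Dfun z q ^ 2 := fun v => by
    rw [show Ffun z = fun q => 1 / Dfun z q from rfl,
      fderiv_fun_div_apply (differentiableAt_const _) hDd hD]
    simp
  have hG : ∀ v, fderiv ℝ (Gfun z) q v =
      ((v.2.2 - fderiv ℝ (pdx z) (q.1, q.2.1) (v.1, v.2.1)) * Dfun z q
        - (q.2.2 - pdx z (q.1, q.2.1)) * fderiv ℝ (Dfun z) q v) / Dfun z q ^ 2 := fun v => by
    rw [show Gfun z = fun q => (q.2.2 - pdx z (q.1, q.2.1)) / Dfun z q from rfl,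
      fderiv_fun_div_apply hNd hDd hD, fderiv_sub_pdx_apply hx]
  have hsymm := hz.fderiv_fderiv_apply_comm (1, 0) (0, 1)
  simp only [Efun, pd1, pd2, pd3, hF, hG, fderiv_Dfun_apply hx hy, GT, Ffun, Gfun,
    Prod.mk_zero_zero, Prod.fst_zero, Prod.snd_zero, map_zero]
  field_simp
  unfold Dfun pdx pdy at *
  rw [hsymm]
  ring

theorem differentiableAt_Ffun (hz : ContDiffAt ℝ 2 z (q.1, q.2.1)) (hD : Dfun z q ≠ 0) :
    DifferentiableAt ℝ (Ffun z) q := by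
  have hx : DifferentiableAt ℝ (pdx z) (q.1, q.2.1) := hz.differentiableAt_fderiv_apply _
  have hy : DifferentiableAt ℝ (pdy z) (q.1, q.2.1) := hz.differentiableAt_fderiv_apply _
  unfold Ffun Dfun
  fun_prop (disch := exact hD)

theorem differentiableAt_Gfun (hz : ContDiffAt ℝ 2 z (q.1, q.2.1)) (hD : Dfun z q ≠ 0) :
    DifferentiableAt ℝ (Gfun z) q := by
  have hx : DifferentiableAt ℝ (pdx z) (q.1, q.2.1) := hz.differentiableAt_fderiv_apply _
  have hy : DifferentiableAt ℝ (pdy z) (q.1, q.2.1) := hz.differentiableAt_fderiv_apply _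
  unfold Gfun Dfun
  fun_prop (disch := exact hD)

end GibbonsTsarev

theorem statement12_general (U : Set (ℝ × ℝ)) (hU : IsOpen U) (z : ℝ × ℝ → ℝ)
    (hz : ContDiffOn ℝ 2 z U) (x₀ y₀ : ℝ) (p₀ : ℝ)
    (Ω' : Set (ℝ × ℝ × ℝ)) (hΩo : IsOpen Ω') (hmem' : (x₀, y₀, p₀) ∈ Ω')
    (hΩsub : Ω' ⊆ {q : ℝ × ℝ × ℝ | (q.1, q.2.1) ∈ U ∧ Dfun z q ≠ 0})
    (ψ : ℝ × ℝ × ℝ → ℝ) (hψ : ContDiffOn ℝ 2 ψ Ω')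
    (hψp : pd3 ψ (x₀, y₀, p₀) ≠ 0)
    (hψx : ∀ q ∈ Ω', pd1 ψ q = -(1 / Dfun z q) * pd3 ψ q)
    (hψy : ∀ q ∈ Ω', pd2 ψ q = ((pdx z (q.1, q.2.1) - q.2.2) / Dfun z q) * pd3 ψ q) :
    GT z (x₀, y₀) = 0 := by
  obtain ⟨hmem, hD⟩ := hΩsub hmem'
  have hz₀ : ContDiffAt ℝ 2 z (x₀, y₀) := hz.contDiffAt (hU.mem_nhds hmem)
  have hu : ∀ᶠ q in 𝓝 (x₀, y₀, p₀), pd1 ψ q + Ffun z q * pd3 ψ q = 0 := by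
    filter_upwards [hΩo.mem_nhds hmem'] with q hq
    rw [hψx q hq, Ffun]
    ring
  have hv : ∀ᶠ q in 𝓝 (x₀, y₀, p₀), pd2 ψ q + Gfun z q * pd3 ψ q = 0 := by
    filter_upwards [hΩo.mem_nhds hmem'] with q hq
    rw [hψy q hq, Gfun]
    ring
  have hE : Efun z (x₀, y₀, p₀) * pd3 ψ (x₀, y₀, p₀) = 0 :=
    curvature_mul_fderiv_eq_zero (hψ.contDiffAt (hΩo.mem_nhds hmem'))
      (differentiableAt_Ffun hz₀ hD) (differentiableAt_Gfun hz₀ hD) hu hv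
  rw [Efun_eq_neg_GT_div_sq hz₀ hD] at hE
  simpa [hD, hψp] using hE

/-- Existence of a nondegenerate `C²` local solution `ψ` of the
Lax-type system (2) near some admissible `(x₀,y₀,p₀)` forces the Gibbons–Tsarev
equation at `(x₀,y₀)`. -/
theorem statement12 (U : Set (ℝ × ℝ)) (hU : IsOpen U) (z : ℝ × ℝ → ℝ)
    (hz : ContDiffOn ℝ 2 z U) (x₀ y₀ : ℝ) (hmem : (x₀, y₀) ∈ U)
    (p₀ : ℝ) (hD : Dfun z (x₀, y₀, p₀) ≠ 0)
    (Ω' : Set (ℝ × ℝ × ℝ)) (hΩo : IsOpen Ω') (hmem' : (x₀, y₀, p₀) ∈ Ω')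
    (hΩsub : Ω' ⊆ {q : ℝ × ℝ × ℝ | (q.1, q.2.1) ∈ U ∧ Dfun z q ≠ 0})
    (ψ : ℝ × ℝ × ℝ → ℝ) (hψ : ContDiffOn ℝ 2 ψ Ω')
    (hψp : pd3 ψ (x₀, y₀, p₀) ≠ 0)
    (hψx : ∀ q ∈ Ω', pd1 ψ q = -(1 / Dfun z q) * pd3 ψ q)
    (hψy : ∀ q ∈ Ω', pd2 ψ q = ((pdx z (q.1, q.2.1) - q.2.2) / Dfun z q) * pd3 ψ q) :
    GT z (x₀, y₀) = 0 :=
  statement12_general U hU z hz x₀ y₀ p₀ Ω' hΩo hmem' hΩsub ψ hψ hψp hψx hψy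
end
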